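/- Let μ̄_X = sup_{P∈𝒫} E_P[X], μ_X = inf_{P∈𝒫} E_P[X], with Δ_X = μ̄_X − μ_X, and similarly for Y. Let Ē[Z] = sup_{P∈𝒫} E_P[Z] and C̄(X,Y) = sup_{P∈conv(𝒫)} Cov_P(X,Y). Then taking (μ₁,μ₂) = (μ̄_X, μ̄_Y) or (μ_X, μ_Y), one has C̄(X,Y) ≤ Ē[(X−μ₁)(Y−μ₂)] ≤ C̄(X,Y) + Δ_XΔ_Y. -/

import Mathlib

/-! For every probability measure `Q`,
`E_Q[(X - μ₁)(Y - μ₂)] = Cov_Q(X, Y) + (E_Q[X] - μ₁)(E_Q[Y] - μ₂)`.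
Expectations are affine along finite convex combinations, so for `Q ∈ conv(𝒫)` the means
`E_Q[X]`, `E_Q[Y]` still lie in `[μ_X, μ̄_X]`, `[μ_Y, μ̄_Y]`, and `E_Q[(X - μ₁)(Y - μ₂)]` is at
most `Ē[(X - μ₁)(Y - μ₂)]`. When `μ₁, μ₂` are both upper or both lower means, the correction term
lies in `[0, Δ_X Δ_Y]`: its lower bound on `conv(𝒫)` gives the first inequality, its upper bound
on `𝒫` the second. -/

open MeasureTheory ENNReal

variable {Ω : Type*} [MeasurableSpace Ω]

/-- Classical covariance of `X` and `Y` under `P`. -/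
noncomputable def covP (P : Measure Ω) (X Y : Ω → ℝ) : ℝ :=
  (∫ ω, X ω * Y ω ∂P) - (∫ ω, X ω ∂P) * (∫ ω, Y ω ∂P)

/-- Classical variance of `X` under `P`. -/
noncomputable def varP (P : Measure Ω) (X : Ω → ℝ) : ℝ :=
  (∫ ω, (X ω) ^ 2 ∂P) - (∫ ω, X ω ∂P) ^ 2

/-- The convex hull of a set of measures: all finite convex combinations. -/
def convHullP (S : Set (Measure Ω)) : Set (Measure Ω) :=
  { Q | ∃ (n : ℕ) (w : Fin n → ℝ≥0∞) (P : Fin n → Measure Ω),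
      (∑ i, w i = 1) ∧ (∀ i, P i ∈ S) ∧ Q = ∑ i, w i • P i }

theorem sub_mul_sub_mem_Icc {a b c d l u l' u' : ℝ} (ha : a ∈ Set.Icc l u)
    (hb : b ∈ Set.Icc l' u') (hcd : (c = u ∧ d = u') ∨ (c = l ∧ d = l')) :
    (a - c) * (b - d) ∈ Set.Icc 0 ((u - l) * (u' - l')) := by
  obtain ⟨hla, hau⟩ := ha
  obtain ⟨hlb, hbu⟩ := hb
  rcases hcd with ⟨rfl, rfl⟩ | ⟨rfl, rfl⟩ <;> constructor <;> nlinarith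

theorem integrable_sub_mul_sub {P : Measure Ω} [IsFiniteMeasure P] {X Y : Ω → ℝ}
    (hX : MemLp X 2 P) (hY : MemLp Y 2 P) (a b : ℝ) :
    Integrable (fun ω => (X ω - a) * (Y ω - b)) P :=
  (hX.sub (memLp_const a)).integrable_mul (hY.sub (memLp_const b))

section ProbabilityMeasure

variable {P : Measure Ω} [IsProbabilityMeasure P] {X Y : Ω → ℝ}

theorem integral_sub_mul_sub_eq_covP_add (hX : Integrable X P) (hY : Integrable Y P)
    (hXY : Integrable (fun ω => X ω * Y ω) P) (a b : ℝ) :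
    ∫ ω, (X ω - a) * (Y ω - b) ∂P = covP P X Y + ((∫ ω, X ω ∂P) - a) * ((∫ ω, Y ω ∂P) - b) := by
  have hbX : Integrable (fun ω => b * X ω) P := hX.const_mul b
  have haY : Integrable (fun ω => a * Y ω) P := hY.const_mul a
  have hXY' : Integrable (fun ω => X ω * Y ω - b * X ω) P := hXY.sub hbX
  have haY' : Integrable (fun ω => a * Y ω - a * b) P := haY.sub (integrable_const _)
  have hexpand : (fun ω => (X ω - a) * (Y ω - b)) =
      fun ω => X ω * Y ω - b * X ω - (a * Y ω - a * b) := by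
    ext ω; ring
  rw [hexpand, integral_sub hXY' haY', integral_sub hXY hbX, integral_sub haY (integrable_const _),
    integral_const_mul, integral_const_mul, integral_const, probReal_univ, one_smul, covP]
  ring

theorem abs_integral_le_of_memLp_two (hX : MemLp X 2 P) :
    |∫ ω, X ω ∂P| ≤ (1 + ∫ ω, X ω ^ 2 ∂P) / 2 := by
  have hX2 : Integrable (fun ω => X ω ^ 2) P := hX.integrable_sq
  have hpointwise (ω : Ω) : |X ω| ≤ (1 + X ω ^ 2) / 2 := by
    nlinarith [sq_nonneg (|X ω| - 1), sq_abs (X ω)]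
  have hmajorant : ∫ ω, |X ω| ∂P ≤ ∫ ω, (1 + X ω ^ 2) / 2 ∂P :=
    integral_mono (hX.integrable one_le_two).abs (((integrable_const 1).add hX2).div_const 2)
      hpointwise
  rw [integral_div, integral_add (integrable_const 1) hX2, integral_const, probReal_univ,
    one_smul] at hmajorant
  exact abs_integral_le_integral_abs.trans hmajorant

theorem integral_sub_mul_sub_le (hX : MemLp X 2 P) (hY : MemLp Y 2 P) (a b : ℝ) :
    ∫ ω, (X ω - a) * (Y ω - b) ∂P ≤ (∫ ω, X ω ^ 2 ∂P) + (∫ ω, Y ω ^ 2 ∂P) + a ^ 2 + b ^ 2 := by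
  have hX2 : Integrable (fun ω => X ω ^ 2) P := hX.integrable_sq
  have hY2 : Integrable (fun ω => Y ω ^ 2) P := hY.integrable_sq
  have hX2Y2 : Integrable (fun ω => X ω ^ 2 + Y ω ^ 2) P := hX2.add hY2
  have hpointwise (ω : Ω) : (X ω - a) * (Y ω - b) ≤ X ω ^ 2 + Y ω ^ 2 + (a ^ 2 + b ^ 2) := by
    nlinarith [sq_nonneg (X ω - a - (Y ω - b)), sq_nonneg (X ω + a), sq_nonneg (Y ω + b)]
  have hmajorant : ∫ ω, (X ω - a) * (Y ω - b) ∂P ≤ ∫ ω, X ω ^ 2 + Y ω ^ 2 + (a ^ 2 + b ^ 2) ∂P :=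
    integral_mono (integrable_sub_mul_sub hX hY a b) (hX2Y2.add (integrable_const _)) hpointwise
  rwa [integral_add hX2Y2 (integrable_const _), integral_add hX2 hY2, integral_const,
    probReal_univ, one_smul, ← add_assoc] at hmajorant

end ProbabilityMeasure

section ConvexHull

variable {S : Set (Measure Ω)} {Q : Measure Ω}

theorem subset_convHullP : S ⊆ convHullP S :=
  fun P hP => ⟨1, fun _ => 1, fun _ => P, by simp, fun _ => hP, by simp⟩

theorem isProbabilityMeasure_of_mem_convHullP (hprob : ∀ P ∈ S, IsProbabilityMeasure P)
    (hQ : Q ∈ convHullP S) : IsProbabilityMeasure Q := by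
  obtain ⟨n, w, P, hw, hP, rfl⟩ := hQ
  constructor
  simp only [Measure.finsetSum_apply, Measure.smul_apply, smul_eq_mul,
    fun i => (hprob (P i) (hP i)).measure_univ, mul_one, hw]

theorem integrable_of_mem_convHullP {Z : Ω → ℝ} (hZ : ∀ P ∈ S, Integrable Z P)
    (hQ : Q ∈ convHullP S) : Integrable Z Q := by
  obtain ⟨n, w, P, hw, hP, rfl⟩ := hQ
  refine integrable_finsetSum_measure.2 fun i _ => (hZ _ (hP i)).smul_measure ?_
  exact (ENNReal.lt_top_of_sum_ne_top (hw ▸ one_ne_top) (Finset.mem_univ i)).ne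

theorem integral_le_of_mem_convHullP {Z : Ω → ℝ} {c : ℝ} (hZ : ∀ P ∈ S, Integrable Z P)
    (hc : ∀ P ∈ S, ∫ ω, Z ω ∂P ≤ c) (hQ : Q ∈ convHullP S) : ∫ ω, Z ω ∂Q ≤ c := by
  obtain ⟨n, w, P, hw, hP, rfl⟩ := hQ
  have hw_ne_top (i : Fin n) : w i ≠ ∞ :=
    (ENNReal.lt_top_of_sum_ne_top (hw ▸ one_ne_top) (Finset.mem_univ i)).ne
  have hw_toReal : ∑ i, (w i).toReal = 1 := by
    rw [← ENNReal.toReal_sum fun i _ => hw_ne_top i, hw, toReal_one]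
  rw [integral_finsetSum_measure fun i _ => (hZ _ (hP i)).smul_measure (hw_ne_top i)]
  simp only [integral_smul_measure, smul_eq_mul]
  calc ∑ i, (w i).toReal * ∫ ω, Z ω ∂P i ≤ ∑ i, (w i).toReal * c :=
        Finset.sum_le_sum fun i _ => mul_le_mul_of_nonneg_left (hc _ (hP i)) toReal_nonneg
    _ = c := by rw [← Finset.sum_mul, hw_toReal, one_mul]

theorem le_integral_of_mem_convHullP {Z : Ω → ℝ} {c : ℝ} (hZ : ∀ P ∈ S, Integrable Z P)
    (hc : ∀ P ∈ S, c ≤ ∫ ω, Z ω ∂P) (hQ : Q ∈ convHullP S) : c ≤ ∫ ω, Z ω ∂Q := by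
  have hneg := integral_le_of_mem_convHullP (Z := fun ω => -Z ω) (c := -c)
    (fun P hP => (hZ P hP).neg) (fun P hP => by rw [integral_neg]; linarith [hc P hP]) hQ
  rw [integral_neg] at hneg
  linarith

end ConvexHull

section SquareIntegrable

variable {S : Set (Measure Ω)} {X Y : Ω → ℝ}

theorem bddAbove_integral_sq_image
    (hbdd : BddAbove ((fun P => (∫ ω, X ω ^ 2 ∂P) + ∫ ω, Y ω ^ 2 ∂P) '' S)) :
    BddAbove ((fun P => ∫ ω, X ω ^ 2 ∂P) '' S) ∧ BddAbove ((fun P => ∫ ω, Y ω ^ 2 ∂P) '' S) := by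
  obtain ⟨M, hM⟩ := hbdd
  have hsq (P : Measure Ω) (hP : P ∈ S) : (∫ ω, X ω ^ 2 ∂P) ≤ M ∧ ∫ ω, Y ω ^ 2 ∂P ≤ M := by
    have hsum : (∫ ω, X ω ^ 2 ∂P) + ∫ ω, Y ω ^ 2 ∂P ≤ M := hM ⟨P, hP, rfl⟩
    have hX2 : 0 ≤ ∫ ω, X ω ^ 2 ∂P := integral_nonneg fun ω => sq_nonneg (X ω)
    have hY2 : 0 ≤ ∫ ω, Y ω ^ 2 ∂P := integral_nonneg fun ω => sq_nonneg (Y ω)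
    constructor <;> linarith
  exact ⟨⟨M, Set.forall_mem_image.2 fun P hP => (hsq P hP).1⟩,
    ⟨M, Set.forall_mem_image.2 fun P hP => (hsq P hP).2⟩⟩

theorem bddAbove_bddBelow_integral_image (hprob : ∀ P ∈ S, IsProbabilityMeasure P)
    (hX : ∀ P ∈ S, MemLp X 2 P) (hX2 : BddAbove ((fun P => ∫ ω, X ω ^ 2 ∂P) '' S)) :
    BddAbove ((fun P => ∫ ω, X ω ∂P) '' S) ∧ BddBelow ((fun P => ∫ ω, X ω ∂P) '' S) := by
  obtain ⟨M, hM⟩ := hX2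
  have habs (P : Measure Ω) (hP : P ∈ S) : |∫ ω, X ω ∂P| ≤ (1 + M) / 2 := by
    have := hprob P hP
    have hP2 : ∫ ω, X ω ^ 2 ∂P ≤ M := hM ⟨P, hP, rfl⟩
    linarith [abs_integral_le_of_memLp_two (hX P hP)]
  exact ⟨⟨(1 + M) / 2, Set.forall_mem_image.2 fun P hP => (abs_le.1 (habs P hP)).2⟩,
    ⟨-((1 + M) / 2), Set.forall_mem_image.2 fun P hP => (abs_le.1 (habs P hP)).1⟩⟩

theorem integral_mem_Icc_of_mem_convHullP (hprob : ∀ P ∈ S, IsProbabilityMeasure P)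
    (hX : ∀ P ∈ S, MemLp X 2 P) (hX2 : BddAbove ((fun P => ∫ ω, X ω ^ 2 ∂P) '' S))
    {Q : Measure Ω} (hQ : Q ∈ convHullP S) :
    ∫ ω, X ω ∂Q ∈
      Set.Icc (sInf ((fun P => ∫ ω, X ω ∂P) '' S)) (sSup ((fun P => ∫ ω, X ω ∂P) '' S)) := by
  obtain ⟨hbddAbove, hbddBelow⟩ := bddAbove_bddBelow_integral_image hprob hX hX2
  have hint (P : Measure Ω) (hP : P ∈ S) : Integrable X P :=
    have := hprob P hP; (hX P hP).integrable one_le_two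
  exact ⟨le_integral_of_mem_convHullP hint (fun P hP => csInf_le hbddBelow ⟨P, hP, rfl⟩) hQ,
    integral_le_of_mem_convHullP hint (fun P hP => le_csSup hbddAbove ⟨P, hP, rfl⟩) hQ⟩

theorem integral_sub_mul_sub_le_sSup_of_mem_convHullP
    (hprob : ∀ P ∈ S, IsProbabilityMeasure P) (hXY : ∀ P ∈ S, MemLp X 2 P ∧ MemLp Y 2 P)
    (hbdd : BddAbove ((fun P => (∫ ω, X ω ^ 2 ∂P) + ∫ ω, Y ω ^ 2 ∂P) '' S)) (a b : ℝ)
    {Q : Measure Ω} (hQ : Q ∈ convHullP S) :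
    ∫ ω, (X ω - a) * (Y ω - b) ∂Q ≤ sSup ((fun P => ∫ ω, (X ω - a) * (Y ω - b) ∂P) '' S) := by
  obtain ⟨M, hM⟩ := hbdd
  have hle (P : Measure Ω) (hP : P ∈ S) : ∫ ω, (X ω - a) * (Y ω - b) ∂P ≤ M + a ^ 2 + b ^ 2 := by
    have := hprob P hP
    have hsum : (∫ ω, X ω ^ 2 ∂P) + ∫ ω, Y ω ^ 2 ∂P ≤ M := hM ⟨P, hP, rfl⟩
    linarith [integral_sub_mul_sub_le (hXY P hP).1 (hXY P hP).2 a b]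
  have hbddAbove : BddAbove ((fun P => ∫ ω, (X ω - a) * (Y ω - b) ∂P) '' S) :=
    ⟨M + a ^ 2 + b ^ 2, Set.forall_mem_image.2 hle⟩
  have hint (P : Measure Ω) (hP : P ∈ S) : Integrable (fun ω => (X ω - a) * (Y ω - b)) P :=
    have := hprob P hP; integrable_sub_mul_sub (hXY P hP).1 (hXY P hP).2 a b
  exact integral_le_of_mem_convHullP hint (fun P hP => le_csSup hbddAbove ⟨P, hP, rfl⟩) hQ

theorem integral_sub_mul_sub_eq_covP_add_of_mem_convHullP
    (hprob : ∀ P ∈ S, IsProbabilityMeasure P) (hXY : ∀ P ∈ S, MemLp X 2 P ∧ MemLp Y 2 P)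
    (a b : ℝ) {Q : Measure Ω} (hQ : Q ∈ convHullP S) :
    ∫ ω, (X ω - a) * (Y ω - b) ∂Q = covP Q X Y + ((∫ ω, X ω ∂Q) - a) * ((∫ ω, Y ω ∂Q) - b) := by
  have := isProbabilityMeasure_of_mem_convHullP hprob hQ
  have hX (P : Measure Ω) (hP : P ∈ S) : Integrable X P :=
    have := hprob P hP; (hXY P hP).1.integrable one_le_two
  have hY (P : Measure Ω) (hP : P ∈ S) : Integrable Y P :=
    have := hprob P hP; (hXY P hP).2.integrable one_le_two
  have hXY' (P : Measure Ω) (hP : P ∈ S) : Integrable (fun ω => X ω * Y ω) P :=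
    (hXY P hP).1.integrable_mul (hXY P hP).2
  exact integral_sub_mul_sub_eq_covP_add (integrable_of_mem_convHullP hX hQ)
    (integrable_of_mem_convHullP hY hQ) (integrable_of_mem_convHullP hXY' hQ) a b

end SquareIntegrable

theorem stmt11 (S : Set (Measure Ω)) (hS : S.Nonempty)
    (hprob : ∀ P ∈ S, IsProbabilityMeasure P) (X Y : Ω → ℝ)
    (hXY : ∀ P ∈ S, MemLp X 2 P ∧ MemLp Y 2 P)
    (hbdd : BddAbove ((fun P => (∫ ω, (X ω) ^ 2 ∂P) + ∫ ω, (Y ω) ^ 2 ∂P) '' S))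
    (μ₁ μ₂ : ℝ)
    (hμ : (μ₁ = sSup ((fun P => ∫ ω, X ω ∂P) '' S) ∧
            μ₂ = sSup ((fun P => ∫ ω, Y ω ∂P) '' S)) ∨
          (μ₁ = sInf ((fun P => ∫ ω, X ω ∂P) '' S) ∧
            μ₂ = sInf ((fun P => ∫ ω, Y ω ∂P) '' S))) :
    sSup ((fun P => covP P X Y) '' convHullP S) ≤
      sSup ((fun P => ∫ ω, (X ω - μ₁) * (Y ω - μ₂) ∂P) '' S) ∧
    sSup ((fun P => ∫ ω, (X ω - μ₁) * (Y ω - μ₂) ∂P) '' S) ≤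
      sSup ((fun P => covP P X Y) '' convHullP S) +
        (sSup ((fun P => ∫ ω, X ω ∂P) '' S) - sInf ((fun P => ∫ ω, X ω ∂P) '' S)) *
        (sSup ((fun P => ∫ ω, Y ω ∂P) '' S) - sInf ((fun P => ∫ ω, Y ω ∂P) '' S)) := by
  obtain ⟨hX2, hY2⟩ := bddAbove_integral_sq_image hbdd
  have hdecomp (Q : Measure Ω) (hQ : Q ∈ convHullP S) :=
    integral_sub_mul_sub_eq_covP_add_of_mem_convHullP hprob hXY μ₁ μ₂ hQ
  have hcorr (Q : Measure Ω) (hQ : Q ∈ convHullP S) :=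
    sub_mul_sub_mem_Icc (integral_mem_Icc_of_mem_convHullP hprob (fun P hP => (hXY P hP).1) hX2 hQ)
      (integral_mem_Icc_of_mem_convHullP hprob (fun P hP => (hXY P hP).2) hY2 hQ) hμ
  have hcov_le (Q : Measure Ω) (hQ : Q ∈ convHullP S) :
      covP Q X Y ≤ sSup ((fun P => ∫ ω, (X ω - μ₁) * (Y ω - μ₂) ∂P) '' S) := by
    linarith [integral_sub_mul_sub_le_sSup_of_mem_convHullP hprob hXY hbdd μ₁ μ₂ hQ,
      hdecomp Q hQ, (hcorr Q hQ).1]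
  refine ⟨csSup_le ((hS.mono subset_convHullP).image _) (Set.forall_mem_image.2 hcov_le),
    csSup_le (hS.image _) (Set.forall_mem_image.2 fun P hP => ?_)⟩
  have hP' := subset_convHullP hP
  have hcovP := le_csSup ⟨_, Set.forall_mem_image.2 hcov_le⟩ (Set.mem_image_of_mem _ hP')
  linarith [hdecomp P hP', (hcorr P hP').2]
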